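/- There exists a unique b₀ > 0 satisfying 2 b₀ Q(b₀) = (1/√(2π)) e^{-b₀²/2}, i.e., 2 b₀ Q(b₀) = -Q'(b₀), where Q is the Gaussian Q-function. Moreover b₀ ∈ (0.6, 0.62). -/

import Mathlib

/-!
Write `φ` for the standard normal density and `R = Q / φ` for the Mills ratio, so that the
equation reads `b R(b) = 1/2`. From `R' = b R - 1` one gets
`(b R(b))' = ((1 + b²) Q(b) - b φ(b)) / φ(b)`, and integrating `x φ = -φ'` and
`(x² - 1) φ = -(x φ)'` over `(b, ∞)` identifies the numerator with `∫_b^∞ (x - b)² φ(x) dx > 0`.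
Hence `b ↦ b R(b)` is strictly increasing on all of `ℝ`, and the root is unique. It lies in
`(0.6, 0.62)` by the intermediate value theorem, the values at the endpoints being controlled by
third-order Taylor bounds for `exp` and bounds on `π`.
-/

open MeasureTheory Real

/-- The Gaussian Q-function (standard normal tail probability). -/
noncomputable def gaussQ (x : ℝ) : ℝ :=
  ∫ k in Set.Ioi x, (1 / Real.sqrt (2 * π)) * Real.exp (-k ^ 2 / 2)

open Set Filter Topology

noncomputable def gaussPDF (x : ℝ) : ℝ := 1 / √(2 * π) * exp (-x ^ 2 / 2)

noncomputable def millsRatio (x : ℝ) : ℝ := gaussQ x / gaussPDF x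

lemma gaussPDF_pos (x : ℝ) : 0 < gaussPDF x := by
  unfold gaussPDF
  positivity

lemma continuous_gaussPDF : Continuous gaussPDF := by
  unfold gaussPDF
  fun_prop

lemma hasDerivAt_gaussPDF (x : ℝ) : HasDerivAt gaussPDF (-x * gaussPDF x) x := by
  have h : HasDerivAt (fun t : ℝ => -t ^ 2 / 2) (-x) x :=
    ((hasDerivAt_pow 2 x).neg.div_const 2).congr_deriv (by ring)
  exact (h.exp.const_mul (1 / √(2 * π))).congr_deriv (by unfold gaussPDF; ring)

lemma integrable_pow_mul_gaussPDF (n : ℕ) : Integrable fun x => x ^ n * gaussPDF x := by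
  have h := (integrable_rpow_mul_exp_neg_mul_sq (b := 1 / 2) (by norm_num)
    (s := n) (by linarith [n.cast_nonneg (α := ℝ)])).const_mul (1 / √(2 * π))
  refine h.congr (Eventually.of_forall fun x => ?_)
  simp only [rpow_natCast, gaussPDF]
  ring_nf

lemma integrable_gaussPDF : Integrable gaussPDF := by
  simpa using integrable_pow_mul_gaussPDF 0

lemma integrable_sq_sub_one_mul_gaussPDF : Integrable fun x => (x ^ 2 - 1) * gaussPDF x := by
  refine ((integrable_pow_mul_gaussPDF 2).sub integrable_gaussPDF).congr (ae_of_all _ fun x => ?_)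
  simp only [Pi.sub_apply]
  ring

lemma integrable_sub_sq_mul_gaussPDF (b : ℝ) : Integrable fun x => (x - b) ^ 2 * gaussPDF x := by
  refine (((integrable_pow_mul_gaussPDF 2).sub
    ((integrable_pow_mul_gaussPDF 1).const_mul (2 * b))).add
      (integrable_gaussPDF.const_mul (b ^ 2))).congr (ae_of_all _ fun x => ?_)
  simp only [Pi.add_apply, Pi.sub_apply]
  ring

lemma tendsto_pow_mul_gaussPDF_atTop (n : ℕ) :
    Tendsto (fun x => x ^ n * gaussPDF x) atTop (𝓝 0) :=
  tendsto_zero_of_hasDerivAt_of_integrableOn_Ioi (a := 0)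
    (f' := fun x => n * (x ^ (n - 1) * gaussPDF x) - x ^ (n + 1) * gaussPDF x)
    (fun x _ => ((hasDerivAt_pow n x).mul (hasDerivAt_gaussPDF x)).congr_deriv (by ring))
    (((integrable_pow_mul_gaussPDF _).const_mul _).sub
      (integrable_pow_mul_gaussPDF _)).integrableOn
    (integrable_pow_mul_gaussPDF n).integrableOn

lemma integral_Ioi_mul_gaussPDF (b : ℝ) : ∫ x in Ioi b, x * gaussPDF x = gaussPDF b := by
  have h := integral_Ioi_of_hasDerivAt_of_tendsto' (a := b) (m := 0)
    (f := fun x => -gaussPDF x) (f' := fun x => x * gaussPDF x)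
    (fun x _ => (hasDerivAt_gaussPDF x).neg.congr_deriv (by ring))
    (by simpa using (integrable_pow_mul_gaussPDF 1).integrableOn)
    (by simpa using (tendsto_pow_mul_gaussPDF_atTop 0).neg)
  simpa using h

lemma integral_Ioi_sq_sub_one_mul_gaussPDF (b : ℝ) :
    ∫ x in Ioi b, (x ^ 2 - 1) * gaussPDF x = b * gaussPDF b := by
  have h := integral_Ioi_of_hasDerivAt_of_tendsto' (a := b) (m := 0)
    (f := fun x => -(x * gaussPDF x)) (f' := fun x => (x ^ 2 - 1) * gaussPDF x)
    (fun x _ => ((hasDerivAt_id x).mul (hasDerivAt_gaussPDF x)).neg.congr_deriv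
      (by simp only [id]; ring))
    integrable_sq_sub_one_mul_gaussPDF.integrableOn
    (by simpa using (tendsto_pow_mul_gaussPDF_atTop 1).neg)
  simpa using h

lemma integral_Ioi_sub_sq_mul_gaussPDF (b : ℝ) :
    ∫ x in Ioi b, (x - b) ^ 2 * gaussPDF x = (1 + b ^ 2) * gaussQ b - b * gaussPDF b := by
  have h1 : IntegrableOn (fun x => x * gaussPDF x) (Ioi b) := by
    simpa using (integrable_pow_mul_gaussPDF 1).integrableOn
  have h2 := integrable_sq_sub_one_mul_gaussPDF.integrableOn (s := Ioi b)
  have h0 := integrable_gaussPDF.integrableOn (s := Ioi b)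
  calc ∫ x in Ioi b, (x - b) ^ 2 * gaussPDF x
      = ∫ x in Ioi b, ((x ^ 2 - 1) * gaussPDF x - 2 * b * (x * gaussPDF x)
          + (1 + b ^ 2) * gaussPDF x) := by congr with x; ring
    _ = b * gaussPDF b - 2 * b * gaussPDF b + (1 + b ^ 2) * gaussQ b := by
      rw [integral_add _ (h0.const_mul _), integral_sub h2 (h1.const_mul _),
        integral_const_mul, integral_const_mul, integral_Ioi_sq_sub_one_mul_gaussPDF,
        integral_Ioi_mul_gaussPDF]
      · rfl
      · exact h2.sub (h1.const_mul _)
    _ = (1 + b ^ 2) * gaussQ b - b * gaussPDF b := by ring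

lemma mul_gaussPDF_lt_one_add_sq_mul_gaussQ (b : ℝ) :
    b * gaussPDF b < (1 + b ^ 2) * gaussQ b := by
  rw [← sub_pos, ← integral_Ioi_sub_sq_mul_gaussPDF]
  have hpos : ∀ x ∈ Ioi b, 0 < (x - b) ^ 2 * gaussPDF x := fun x hx =>
    mul_pos (pow_pos (sub_pos.2 hx) 2) (gaussPDF_pos x)
  rw [setIntegral_pos_iff_support_of_nonneg_ae
    ((ae_restrict_iff' measurableSet_Ioi).2 (ae_of_all _ fun x hx => (hpos x hx).le))]
  · rw [inter_eq_right.2 fun x hx => Function.mem_support.2 (hpos x hx).ne']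
    simp
  · exact (integrable_sub_sq_mul_gaussPDF b).integrableOn

lemma gaussQ_zero : gaussQ 0 = 1 / 2 := by
  have h := integral_gaussian_Ioi (1 / 2)
  rw [show π / (1 / 2) = 2 * π by ring] at h
  rw [gaussQ, integral_const_mul]
  simp only [neg_div, ← neg_mul, div_eq_inv_mul (_ ^ 2), one_div] at h ⊢
  rw [h]
  field_simp [(sqrt_pos.2 (by positivity : 0 < 2 * π)).ne']

lemma gaussQ_sub_gaussQ (a b : ℝ) : gaussQ a - gaussQ b = ∫ x in a..b, gaussPDF x :=
  intervalIntegral.integral_Ioi_sub_Ioi' integrable_gaussPDF.integrableOn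
    integrable_gaussPDF.integrableOn

lemma gaussQ_eq_half_sub (x : ℝ) : gaussQ x = 1 / 2 - ∫ t in 0..x, gaussPDF t := by
  rw [← gaussQ_sub_gaussQ, gaussQ_zero]
  ring

lemma hasDerivAt_gaussQ (x : ℝ) : HasDerivAt gaussQ (-gaussPDF x) x := by
  rw [funext gaussQ_eq_half_sub]
  exact (intervalIntegral.integral_hasDerivAt_right (a := 0)
    integrable_gaussPDF.intervalIntegrable (continuous_gaussPDF.stronglyMeasurableAtFilter _ _)
    continuous_gaussPDF.continuousAt).const_sub _

lemma hasDerivAt_millsRatio (x : ℝ) : HasDerivAt millsRatio (x * millsRatio x - 1) x := by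
  have hφ := (gaussPDF_pos x).ne'
  refine ((hasDerivAt_gaussQ x).div (hasDerivAt_gaussPDF x) hφ).congr_deriv ?_
  rw [millsRatio]
  field_simp
  ring

lemma hasDerivAt_mul_millsRatio (x : ℝ) :
    HasDerivAt (fun x => x * millsRatio x) ((1 + x ^ 2) * gaussQ x / gaussPDF x - x) x :=
  ((hasDerivAt_id x).mul (hasDerivAt_millsRatio x)).congr_deriv (by
    rw [millsRatio, id]
    field_simp [(gaussPDF_pos x).ne']
    ring)

lemma strictMono_mul_millsRatio : StrictMono fun x => x * millsRatio x := by
  refine strictMono_of_hasDerivAt_pos hasDerivAt_mul_millsRatio fun x => ?_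
  rw [sub_pos, lt_div_iff₀ (gaussPDF_pos x)]
  exact mul_gaussPDF_lt_one_add_sq_mul_gaussQ x

lemma mul_millsRatio_eq_half_iff (b : ℝ) :
    b * millsRatio b = 1 / 2 ↔ 2 * b * gaussQ b = gaussPDF b := by
  rw [millsRatio, ← mul_div_assoc, div_eq_iff (gaussPDF_pos b).ne']
  constructor <;> intro h <;> linarith

lemma mul_millsRatio_lt_half_iff (b : ℝ) :
    b * millsRatio b < 1 / 2 ↔ 2 * b * gaussQ b < gaussPDF b := by
  rw [millsRatio, ← mul_div_assoc, div_lt_iff₀ (gaussPDF_pos b)]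
  constructor <;> intro h <;> linarith

lemma half_lt_mul_millsRatio_iff (b : ℝ) :
    1 / 2 < b * millsRatio b ↔ gaussPDF b < 2 * b * gaussQ b := by
  rw [millsRatio, ← mul_div_assoc, lt_div_iff₀ (gaussPDF_pos b)]
  constructor <;> intro h <;> linarith

lemma gaussQ_eq_half_sub_integral_exp (x : ℝ) :
    gaussQ x = 1 / 2 - (∫ t in 0..x, exp (-t ^ 2 / 2)) / √(2 * π) := by
  simp only [gaussQ_eq_half_sub, gaussPDF, intervalIntegral.integral_const_mul]
  ring

lemma abs_exp_neg_sq_div_two_sub_le {k : ℝ} (hk : k ^ 2 ≤ 2) :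
    |exp (-k ^ 2 / 2) - (1 - k ^ 2 / 2 + k ^ 4 / 8)| ≤ k ^ 6 / 36 := by
  have h := Real.exp_bound (x := -k ^ 2 / 2) (n := 3)
    (by rw [abs_of_nonpos (by nlinarith)]; linarith) (by norm_num)
  rw [abs_of_nonpos (by nlinarith : -k ^ 2 / 2 ≤ 0)] at h
  norm_num [Finset.sum_range_succ, Nat.factorial] at h
  convert h using 2 <;> ring

lemma abs_integral_exp_neg_sq_div_two_sub_le {x : ℝ} (h0 : 0 ≤ x) (hx : x ^ 2 ≤ 2) :
    |(∫ t in 0..x, exp (-t ^ 2 / 2)) - (x - x ^ 3 / 6 + x ^ 5 / 40)| ≤ x ^ 7 / 252 := by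
  have hpoly : ∫ t in 0..x, (1 - t ^ 2 / 2 + t ^ 4 / 8) = x - x ^ 3 / 6 + x ^ 5 / 40 := by
    rw [intervalIntegral.integral_add, intervalIntegral.integral_sub,
      intervalIntegral.integral_div, intervalIntegral.integral_div]
    all_goals first
      | simp only [integral_one, integral_pow]; ring
      | exact (by fun_prop : Continuous _).intervalIntegrable _ _
  have hbound : ∫ t in 0..x, t ^ 6 / 36 = x ^ 7 / 252 := by
    simp only [intervalIntegral.integral_div, integral_pow]
    ring
  have hcont {f : ℝ → ℝ} (hf : Continuous f) : IntervalIntegrable f volume 0 x :=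
    hf.intervalIntegrable 0 x
  rw [← hpoly, ← hbound,
    ← intervalIntegral.integral_sub (hcont (by fun_prop)) (hcont (by fun_prop)), ← norm_eq_abs]
  refine intervalIntegral.norm_integral_le_of_norm_le h0 (ae_of_all _ fun t ht => ?_)
    (hcont (f := fun t => t ^ 6 / 36) (by fun_prop))
  exact abs_exp_neg_sq_div_two_sub_le (by nlinarith [ht.1, ht.2])

lemma sqrt_two_pi_mem_Ioo : √(2 * π) ∈ Ioo 2.5066 2.5067 :=
  ⟨(lt_sqrt (by norm_num)).2 (by nlinarith [pi_gt_d6]),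
    (sqrt_lt' (by norm_num)).2 (by nlinarith [pi_lt_d6])⟩

lemma mul_millsRatio_six_tenths_lt_half : (0.6 : ℝ) * millsRatio 0.6 < 1 / 2 := by
  rw [mul_millsRatio_lt_half_iff, gaussQ_eq_half_sub_integral_exp, gaussPDF]
  obtain ⟨hs_lo, hs_hi⟩ := sqrt_two_pi_mem_Ioo
  have hJ := abs_le.1
    (abs_integral_exp_neg_sq_div_two_sub_le (x := 0.6) (by norm_num) (by norm_num))
  have hE := abs_le.1 (abs_exp_neg_sq_div_two_sub_le (k := 0.6) (by norm_num))
  generalize √(2 * π) = s at hs_lo hs_hi ⊢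
  generalize ∫ t in (0 : ℝ)..0.6, exp (-t ^ 2 / 2) = J at hJ ⊢
  generalize exp (-0.6 ^ 2 / 2) = E at hE ⊢
  rw [← sub_pos, show 1 / s * E - 2 * 0.6 * (1 / 2 - J / s) = (1.2 * J + E - 0.6 * s) / s by
    field_simp; ring]
  exact div_pos (by norm_num at hJ hE ⊢; linarith) (by linarith)

lemma half_lt_mul_millsRatio_sixty_two_hundredths : 1 / 2 < (0.62 : ℝ) * millsRatio 0.62 := by
  rw [half_lt_mul_millsRatio_iff, gaussQ_eq_half_sub_integral_exp, gaussPDF]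
  obtain ⟨hs_lo, hs_hi⟩ := sqrt_two_pi_mem_Ioo
  have hJ := abs_le.1
    (abs_integral_exp_neg_sq_div_two_sub_le (x := 0.62) (by norm_num) (by norm_num))
  have hE := abs_le.1 (abs_exp_neg_sq_div_two_sub_le (k := 0.62) (by norm_num))
  generalize √(2 * π) = s at hs_lo hs_hi ⊢
  generalize ∫ t in (0 : ℝ)..0.62, exp (-t ^ 2 / 2) = J at hJ ⊢
  generalize exp (-0.62 ^ 2 / 2) = E at hE ⊢
  rw [← sub_pos, show 2 * 0.62 * (1 / 2 - J / s) - 1 / s * E = (0.62 * s - 1.24 * J - E) / s by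
    field_simp; ring]
  exact div_pos (by norm_num at hJ hE ⊢; linarith) (by linarith)

theorem stmt_9 :
    (∃! b₀ : ℝ, 0 < b₀ ∧
        2 * b₀ * gaussQ b₀ = 1 / Real.sqrt (2 * π) * Real.exp (-b₀ ^ 2 / 2)) ∧
    (∀ b₀ : ℝ, 0 < b₀ →
        2 * b₀ * gaussQ b₀ = 1 / Real.sqrt (2 * π) * Real.exp (-b₀ ^ 2 / 2) →
        b₀ ∈ Set.Ioo (0.6 : ℝ) 0.62) := by
  set f : ℝ → ℝ := fun b => b * millsRatio b
  have hmono : StrictMono f := strictMono_mul_millsRatio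
  have hroot (b : ℝ) : 2 * b * gaussQ b = 1 / √(2 * π) * exp (-b ^ 2 / 2) ↔ f b = 1 / 2 :=
    (mul_millsRatio_eq_half_iff b).symm
  have hcont : Continuous f :=
    continuous_iff_continuousAt.2 fun x => (hasDerivAt_mul_millsRatio x).continuousAt
  have hlo : f 0.6 < 1 / 2 := mul_millsRatio_six_tenths_lt_half
  have hhi : 1 / 2 < f 0.62 := half_lt_mul_millsRatio_sixty_two_hundredths
  obtain ⟨b₀, hb₀, hfb₀⟩ := intermediate_value_Ioo (by norm_num) hcont.continuousOn ⟨hlo, hhi⟩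
  refine ⟨⟨b₀, ⟨hb₀.1.trans' (by norm_num), (hroot b₀).2 hfb₀⟩, fun b hb => ?_⟩, fun b _ hb => ?_⟩
  · exact hmono.injective (((hroot b).1 hb.2).trans hfb₀.symm)
  · have hfb := (hroot b).1 hb
    exact ⟨hmono.lt_iff_lt.1 (hfb ▸ hlo), hmono.lt_iff_lt.1 (hfb ▸ hhi)⟩
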